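/- Let Ω ⊂ ℝ^d (d ≥ 2) be a convex body with boundary y = |x|^γ near the origin (γ ≥ 2) and positive curvature elsewhere. Then there are constants c > 0 and ρ₀ such that ∫_{SO(d)} |\widehat{χ}_Ω(ρ σ e)| dσ ≥ c ρ^{−(d+1)/2} for all ρ ≥ ρ₀. -/

import Mathlib

open MeasureTheory Real Filter

noncomputable section

abbrev SOd (d : ℕ) := Matrix.specialOrthogonalGroup (Fin d) ℝ

instance (d : ℕ) : MeasurableSpace (SOd d) := borel _

open RealInnerProductSpace in
/-- Fourier transform of the characteristic function of `Ω`. -/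
def ftChi {d : ℕ} (Ω : Set (EuclideanSpace ℝ (Fin d))) (ξ : EuclideanSpace ℝ (Fin d)) : ℂ :=
  ∫ x in Ω, Complex.exp (-(2 * Real.pi * Complex.I) * ((⟪ξ, x⟫ : ℝ) : ℂ))

/-- Number of integer lattice points in a set `A ⊆ ℝ^d`. -/
def latticeCount {d : ℕ} (A : Set (EuclideanSpace ℝ (Fin d))) : ℕ :=
  Nat.card {k : Fin d → ℤ // ((WithLp.equiv 2 (Fin d → ℝ)).symm fun i => (k i : ℝ)) ∈ A}

/-- Fundamental domain of the torus `T^d = ℝ^d/ℤ^d`. -/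
def cube (d : ℕ) : Set (EuclideanSpace ℝ (Fin d)) := {x | ∀ i, x i ∈ Set.Icc (0:ℝ) 1}

/-- Action of a special orthogonal matrix on `ℝ^d`. -/
def rotBy {d : ℕ} (σ : SOd d) (x : EuclideanSpace ℝ (Fin d)) : EuclideanSpace ℝ (Fin d) :=
  (WithLp.equiv 2 (Fin d → ℝ)).symm (σ.1.mulVec (WithLp.equiv 2 (Fin d → ℝ) x))

/-- Embedding of an integer vector in `ℝ^d`. -/
def intVec {d : ℕ} (n : Fin d → ℤ) : EuclideanSpace ℝ (Fin d) :=
  (WithLp.equiv 2 (Fin d → ℝ)).symm fun i => (n i : ℝ)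

/-- The character `exp(2πi n·t)`. -/
def eChar {d : ℕ} (n : Fin d → ℤ) (t : EuclideanSpace ℝ (Fin d)) : ℂ :=
  Complex.exp (2 * Real.pi * Complex.I * ((∑ i, (n i : ℝ) * t i : ℝ) : ℂ))

/-- Discrepancy `D_{RΩ}(σ,t) = R^d|Ω| − card(ℤ^d ∩ (Rσ(Ω)+t))`. -/
def disc {d : ℕ} (Ω : Set (EuclideanSpace ℝ (Fin d))) (R : ℝ) (σ : SOd d)
    (t : EuclideanSpace ℝ (Fin d)) : ℝ :=
  R ^ d * (volume Ω).toReal - latticeCount ((fun x => R • rotBy σ x + t) '' Ω)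

/-!
On the set `A` of rotations the stationary-phase main term is `(2πi)⁻¹ ρ^{-(d+1)/2}` times
`a e₁ - b e₂` with unimodular `e₁, e₂` and amplitudes `a = K(σ₁)^{-1/2}`, `b = K(σ₂)^{-1/2}`.
The curvature separation gives `a - b ≥ δ := (κ/2)^{-1/2} - κ^{-1/2} > 0`, so the two waves
cannot cancel and the main term has modulus at least `δ ρ^{-(d+1)/2} / (2π)`. For large `ρ` the
`O(ρ^{-(d+3)/2})` error is at most half of this, so `|χ̂_Ω(ρσe)| ≥ δ ρ^{-(d+1)/2} / (4π)` on `A`,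
and integrating over `A` gives the bound with `c = μ(A) δ / (4π)`.
-/

instance (d : ℕ) : BorelSpace (SOd d) := ⟨rfl⟩

open RealInnerProductSpace in
lemma stronglyMeasurable_ftChi {d : ℕ} (Ω : Set (EuclideanSpace ℝ (Fin d))) :
    StronglyMeasurable (ftChi Ω) :=
  StronglyMeasurable.integral_prod_right
    (f := fun ξ x => Complex.exp (-(2 * π * Complex.I) * ((⟪ξ, x⟫ : ℝ) : ℂ)))
    (by fun_prop : Continuous _).stronglyMeasurable

lemma norm_ftChi_le {d : ℕ} (Ω : Set (EuclideanSpace ℝ (Fin d))) (ξ : EuclideanSpace ℝ (Fin d)) :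
    ‖ftChi Ω ξ‖ ≤ volume.real Ω :=
  (norm_integral_le_integral_norm _).trans_eq (by simp [Complex.norm_exp])

lemma continuous_rotBy_apply {d : ℕ} (x : EuclideanSpace ℝ (Fin d)) :
    Continuous fun σ : SOd d => rotBy σ x :=
  (PiLp.continuous_toLp 2 _).comp (continuous_subtype_val.matrix_mulVec continuous_const)

lemma integrable_norm_ftChi_smul_rotBy {d : ℕ} (Ω : Set (EuclideanSpace ℝ (Fin d)))
    (μ : Measure (SOd d)) [IsFiniteMeasure μ] (ρ : ℝ) (x : EuclideanSpace ℝ (Fin d)) :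
    Integrable (fun σ => ‖ftChi Ω (ρ • rotBy σ x)‖) μ :=
  (integrable_const (volume.real Ω)).mono'
    ((stronglyMeasurable_ftChi Ω).comp_measurable
      ((continuous_rotBy_apply x).const_smul ρ).measurable).norm.aestronglyMeasurable
    (ae_of_all _ fun _ => by simpa using norm_ftChi_le Ω _)

lemma le_norm_of_norm_sub_stationaryPhase_le {F E₁ E₂ : ℂ} {r a b δ : ℝ}
    (hr : 0 ≤ r) (hb : 0 ≤ b) (hE₁ : ‖E₁‖ = 1) (hE₂ : ‖E₂‖ = 1) (hgap : δ ≤ a - b)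
    (hF : ‖F - (2 * (π : ℂ) * Complex.I)⁻¹ * (r : ℂ) * ((a : ℂ) * E₁ - (b : ℂ) * E₂)‖ ≤
      δ / (4 * π) * r) :
    δ / (4 * π) * r ≤ ‖F‖ := by
  set M := (2 * (π : ℂ) * Complex.I)⁻¹ * (r : ℂ) * ((a : ℂ) * E₁ - (b : ℂ) * E₂)
  have hwave : δ ≤ ‖(a : ℂ) * E₁ - (b : ℂ) * E₂‖ := by
    have := norm_sub_norm_le ((a : ℂ) * E₁) ((b : ℂ) * E₂)
    rw [norm_mul, norm_mul, hE₁, hE₂, Complex.norm_real, Complex.norm_real, Real.norm_eq_abs,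
      Real.norm_eq_abs, abs_of_nonneg hb] at this
    linarith [le_abs_self a]
  have hM : 2 * (δ / (4 * π) * r) ≤ ‖M‖ := by
    have hnorm : ‖M‖ = r / (2 * π) * ‖(a : ℂ) * E₁ - (b : ℂ) * E₂‖ := by
      simp [M, abs_of_nonneg hr, pi_pos.le, div_eq_inv_mul, mul_comm]
    calc 2 * (δ / (4 * π) * r) = r / (2 * π) * δ := by field_simp; ring
      _ ≤ ‖M‖ := hnorm ▸ mul_le_mul_of_nonneg_left hwave (by positivity)
  linarith [norm_sub_norm_le M F, norm_sub_rev M F]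

lemma mul_rpow_sub_one_le {C c ρ s : ℝ} (hρ : 0 < ρ) (hc : 0 < c) (h : C / c ≤ ρ) :
    C * ρ ^ (s - 1) ≤ c * ρ ^ s := by
  rw [Real.rpow_sub_one hρ.ne', mul_div_assoc', div_le_iff₀ hρ, mul_right_comm]
  exact mul_le_mul_of_nonneg_right ((div_le_iff₀' hc).1 h) (by positivity)

open RealInnerProductSpace in
theorem rotational_L1_fourier_lower_bound_general
    (d : ℕ)
    (Ω : Set (EuclideanSpace ℝ (Fin d)))
    (μ : Measure (SOd d)) [IsProbabilityMeasure μ]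
    (e : EuclideanSpace ℝ (Fin d))
    (A : Set (SOd d)) (hAm : MeasurableSet A) (hA : 0 < μ A)
    (s₁ s₂ : SOd d → EuclideanSpace ℝ (Fin d)) (k₁ k₂ : SOd d → ℝ)
    (κ : ℝ) (hκ : 0 < κ)
    (hk : ∀ σ ∈ A, 0 < k₁ σ ∧ k₁ σ < κ / 2 ∧ κ < k₂ σ)
    (Cerr ρ₁ : ℝ) (hρ₁ : 1 ≤ ρ₁)
    (hasymp : ∀ σ ∈ A, ∀ ρ : ℝ, ρ₁ ≤ ρ →
      ‖ftChi Ω (ρ • rotBy σ e) -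
        (2 * (Real.pi : ℂ) * Complex.I)⁻¹ * ((ρ ^ (-((d : ℝ) + 1) / 2) : ℝ) : ℂ) *
          (((k₁ σ ^ (-(1 : ℝ) / 2) : ℝ) : ℂ) *
              Complex.exp (-(2 * (Real.pi : ℂ) * Complex.I) *
                  ((ρ * ⟪rotBy σ e, s₁ σ⟫ : ℝ) : ℂ) -
                (Real.pi : ℂ) * Complex.I * ((d : ℂ) - 1) / 4) -
            ((k₂ σ ^ (-(1 : ℝ) / 2) : ℝ) : ℂ) *
              Complex.exp (-(2 * (Real.pi : ℂ) * Complex.I) *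
                  ((ρ * ⟪rotBy σ e, s₂ σ⟫ : ℝ) : ℂ) +
                (Real.pi : ℂ) * Complex.I * ((d : ℂ) - 1) / 4))‖ ≤
        Cerr * ρ ^ (-((d : ℝ) + 3) / 2)) :
    ∃ c > (0 : ℝ), ∃ ρ₀ : ℝ, ∀ ρ : ℝ, ρ₀ ≤ ρ →
      c * ρ ^ (-((d : ℝ) + 1) / 2) ≤ ∫ σ, ‖ftChi Ω (ρ • rotBy σ e)‖ ∂μ := by
  set δ := (κ / 2) ^ (-(1 : ℝ) / 2) - κ ^ (-(1 : ℝ) / 2)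
  have hδ : 0 < δ := sub_pos.2 (Real.rpow_lt_rpow_of_neg (by positivity) (by linarith) (by norm_num))
  have hμA : 0 < μ.real A := ENNReal.toReal_pos hA.ne' (measure_ne_top μ A)
  refine ⟨μ.real A * (δ / (4 * π)), by positivity, max ρ₁ (Cerr / (δ / (4 * π))),
    fun ρ hρ => ?_⟩
  have hρ₁' : ρ₁ ≤ ρ := le_of_max_le_left hρ
  have hρ0 : 0 < ρ := by linarith
  have herr : Cerr * ρ ^ (-((d : ℝ) + 3) / 2) ≤ δ / (4 * π) * ρ ^ (-((d : ℝ) + 1) / 2) := by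
    rw [show -((d : ℝ) + 3) / 2 = -((d : ℝ) + 1) / 2 - 1 by ring]
    exact mul_rpow_sub_one_le hρ0 (by positivity) (le_of_max_le_right hρ)
  have hpoint : ∀ σ ∈ A,
      δ / (4 * π) * ρ ^ (-((d : ℝ) + 1) / 2) ≤ ‖ftChi Ω (ρ • rotBy σ e)‖ := by
    intro σ hσ
    obtain ⟨hk₁, hk₁κ, hκk₂⟩ := hk σ hσ
    have hgap : δ ≤ k₁ σ ^ (-(1 : ℝ) / 2) - k₂ σ ^ (-(1 : ℝ) / 2) :=
      sub_le_sub (Real.rpow_le_rpow_of_nonpos hk₁ hk₁κ.le (by norm_num))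
        (Real.rpow_le_rpow_of_nonpos hκ hκk₂.le (by norm_num))
    exact le_norm_of_norm_sub_stationaryPhase_le (by positivity) (Real.rpow_nonneg (by linarith) _)
      (by simp [Complex.norm_exp]) (by simp [Complex.norm_exp]) hgap
      ((hasymp σ hσ ρ hρ₁').trans herr)
  have hint := integrable_norm_ftChi_smul_rotBy Ω μ ρ e
  calc μ.real A * (δ / (4 * π)) * ρ ^ (-((d : ℝ) + 1) / 2)
      = δ / (4 * π) * ρ ^ (-((d : ℝ) + 1) / 2) * μ.real A := by ring
    _ ≤ ∫ σ in A, ‖ftChi Ω (ρ • rotBy σ e)‖ ∂μ :=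
      setIntegral_ge_of_const_le_real hAm (measure_ne_top μ A) hpoint hint.integrableOn
    _ ≤ _ := setIntegral_le_integral hint (ae_of_all _ fun _ => norm_nonneg _)

open RealInnerProductSpace in
/-- lower bound `c ρ^{−(d+1)/2}` for the rotational `L¹` average of the Fourier
transform, via the stationary-phase asymptotics and the curvature separation
`K(σ₂) > κ`, `K(σ₁) < κ/2` on a set of rotations of positive measure. -/
theorem rotational_L1_fourier_lower_bound
    (d : ℕ) (hd : 2 ≤ d) (γ : ℝ) (hγ : 2 ≤ γ)
    (Ω : Set (EuclideanSpace ℝ (Fin d)))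
    (hconv : Convex ℝ Ω) (hcomp : IsCompact Ω) (hint : (interior Ω).Nonempty)
    (μ : Measure (SOd d)) [IsProbabilityMeasure μ]
    (hμinv : ∀ τ : SOd d, Measure.map (fun σ => τ * σ) μ = μ)
    (e : EuclideanSpace ℝ (Fin d)) (he : ‖e‖ = 1)
    (A : Set (SOd d)) (hAm : MeasurableSet A) (hA : 0 < μ A)
    (s₁ s₂ : SOd d → EuclideanSpace ℝ (Fin d)) (k₁ k₂ : SOd d → ℝ)
    (κ : ℝ) (hκ : 0 < κ)
    (hk : ∀ σ ∈ A, 0 < k₁ σ ∧ k₁ σ < κ / 2 ∧ κ < k₂ σ)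
    (Cerr ρ₁ : ℝ) (hρ₁ : 1 ≤ ρ₁)
    (hasymp : ∀ σ ∈ A, ∀ ρ : ℝ, ρ₁ ≤ ρ →
      ‖ftChi Ω (ρ • rotBy σ e) -
        (2 * (Real.pi : ℂ) * Complex.I)⁻¹ * ((ρ ^ (-((d : ℝ) + 1) / 2) : ℝ) : ℂ) *
          (((k₁ σ ^ (-(1 : ℝ) / 2) : ℝ) : ℂ) *
              Complex.exp (-(2 * (Real.pi : ℂ) * Complex.I) *
                  ((ρ * ⟪rotBy σ e, s₁ σ⟫ : ℝ) : ℂ) -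
                (Real.pi : ℂ) * Complex.I * ((d : ℂ) - 1) / 4) -
            ((k₂ σ ^ (-(1 : ℝ) / 2) : ℝ) : ℂ) *
              Complex.exp (-(2 * (Real.pi : ℂ) * Complex.I) *
                  ((ρ * ⟪rotBy σ e, s₂ σ⟫ : ℝ) : ℂ) +
                (Real.pi : ℂ) * Complex.I * ((d : ℂ) - 1) / 4))‖ ≤
        Cerr * ρ ^ (-((d : ℝ) + 3) / 2)) :
    ∃ c > (0 : ℝ), ∃ ρ₀ : ℝ, ∀ ρ : ℝ, ρ₀ ≤ ρ →
      c * ρ ^ (-((d : ℝ) + 1) / 2) ≤ ∫ σ, ‖ftChi Ω (ρ • rotBy σ e)‖ ∂μ :=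
  rotational_L1_fourier_lower_bound_general d Ω μ e A hAm hA s₁ s₂ k₁ k₂ κ hκ hk Cerr ρ₁ hρ₁ hasymp
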